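/- Let σ be a type, L a regular language over the alphabet σ₂, and O the family of σ-caterpillars described by the words of L. Then there exists a σ-structure A such that (O, A) is a homomorphism duality: for every σ-structure B, B admits a homomorphism to A if and only if no member of O admits a homomorphism to B. -/

import Mathlib

/-! Basic framework: relational structures of a finite type `σ` with arities `ar`,
homomorphisms, the binary type/alphabet `σ₂`, the functors `β` and `β*`,
path structures `P_w`, nondeterministic acceptance, and caterpillar notions. -/

/-- A `σ`-structure: a finite universe together with an `ar R`-ary relation for each `R ∈ σ`. -/
structure Str (σ : Type) (ar : σ → ℕ) : Type 1 where
  V : Type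
  finiteV : Finite V
  rel : ∀ R : σ, Set ((Fin (ar R)) → V)

/-- The alphabet (and binary type) `σ₂`: a symbol `R^(i,j)` for each `R ∈ σ` of arity `k`
and each `(i,j) ∈ {1,…,k}²`. -/
abbrev Sig2 (σ : Type) (ar : σ → ℕ) : Type := Σ R : σ, Fin (ar R) × Fin (ar R)

/-- A `σ₂`-structure: a finite universe with a binary relation for each symbol of `σ₂`. -/
structure Str2 (σ : Type) (ar : σ → ℕ) : Type 1 where
  V : Type
  finiteV : Finite V
  rel : Sig2 σ ar → Set (V × V)

variable {σ : Type} [Finite σ] {ar : σ → ℕ}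

/-- Existence of a homomorphism between `σ`-structures. -/
def Str.Hom (A B : Str σ ar) : Prop :=
  ∃ f : A.V → B.V, ∀ (R : σ) (t : Fin (ar R) → A.V), t ∈ A.rel R → (fun i => f (t i)) ∈ B.rel R

/-- Existence of a homomorphism between `σ₂`-structures. -/
def Str2.Hom (X Y : Str2 σ ar) : Prop :=
  ∃ f : X.V → Y.V, ∀ (s : Sig2 σ ar) (p : X.V × X.V), p ∈ X.rel s → (f p.1, f p.2) ∈ Y.rel s

/-- Isomorphism of `σ`-structures. -/
def Str.Iso (A B : Str σ ar) : Prop :=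
  ∃ f : A.V ≃ B.V, ∀ (R : σ) (t : Fin (ar R) → A.V), t ∈ A.rel R ↔ (fun i => f (t i)) ∈ B.rel R

/-- The functor `β`: same universe, `(x_i, x_j) ∈ R^(i,j)(β B)` for each `(x_1,…,x_k) ∈ R(B)`. -/
def strBeta (B : Str σ ar) : Str2 σ ar where
  V := B.V
  finiteV := B.finiteV
  rel := fun s => { p | ∃ t ∈ B.rel s.1, t s.2.1 = p.1 ∧ t s.2.2 = p.2 }

/-- The carrier of `β*(X)⁺`: a copy of each element of `X` together with fresh elements
`x_1, …, x_k` for each `(x,y) ∈ R^(i,j)(X)`. -/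
abbrev PlusCarrier (X : Str2 σ ar) : Type :=
  X.V ⊕ Σ s : Sig2 σ ar, { p : X.V × X.V // p ∈ X.rel s } × Fin (ar s.1)

/-- The identifications generating `∼`: for `(x,y) ∈ R^(i,j)(X)`, identify `x_i` with `x`
and `x_j` with `y`. -/
inductive PreRel (X : Str2 σ ar) : PlusCarrier X → PlusCarrier X → Prop
  | left (s : Sig2 σ ar) (p : { p : X.V × X.V // p ∈ X.rel s }) :
      PreRel X (Sum.inr ⟨s, p, s.2.1⟩) (Sum.inl p.1.1)
  | right (s : Sig2 σ ar) (p : { p : X.V × X.V // p ∈ X.rel s }) :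
      PreRel X (Sum.inr ⟨s, p, s.2.2⟩) (Sum.inl p.1.2)

/-- The functor `β*`, left adjoint to `β`. -/
def strBetaStar (X : Str2 σ ar) : Str σ ar where
  V := Quot (PreRel X)
  finiteV := by
    have : Finite X.V := X.finiteV
    exact Finite.of_surjective (Quot.mk (PreRel X)) (fun q => Quot.exists_rep q)
  rel := fun R => { t | ∃ (i j : Fin (ar R)) (p : X.V × X.V) (hp : p ∈ X.rel ⟨R, (i, j)⟩),
      t = fun m => Quot.mk (PreRel X) (Sum.inr ⟨⟨R, (i, j)⟩, ⟨p, hp⟩, m⟩) }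

/-- The `σ₂`-path `P_w` of a word `w ∈ σ₂*`. -/
def PathStr (w : List (Sig2 σ ar)) : Str2 σ ar where
  V := Fin (w.length + 1)
  finiteV := inferInstance
  rel := fun s => { p | ∃ t : Fin w.length, w.get t = s ∧ p = (t.castSucc, t.succ) }

/-- Acceptance of the word `w` by the `σ₂`-structure `X` viewed as a nondeterministic
automaton with initial states `I` and terminal states `T`. -/
def NAccepts (X : Str2 σ ar) (I T : Set X.V) (w : List (Sig2 σ ar)) : Prop :=
  ∃ f : Fin (w.length + 1) → X.V,
    (∀ (s : Sig2 σ ar) (p : Fin (w.length + 1) × Fin (w.length + 1)),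
        p ∈ (PathStr w).rel s → (f p.1, f p.2) ∈ X.rel s) ∧
    f 0 ∈ I ∧ f (Fin.last w.length) ∈ T

/-! Caterpillars. -/

/-- The blocks (hyperedges) of a `σ`-structure. -/
def Str.Block (A : Str σ ar) : Type := Σ R : σ, { t : Fin (ar R) → A.V // t ∈ A.rel R }

/-- The underlying simple graph of the incidence multigraph `Inc(A)`. -/
def IncGraph (A : Str σ ar) : SimpleGraph (A.V ⊕ A.Block) :=
  SimpleGraph.fromRel (fun u v =>
    ∃ (b : A.Block) (i : Fin (ar b.1)), u = Sum.inl (b.2.1 i) ∧ v = Sum.inr b)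

/-- `a` is a leaf when it has degree one in `Inc(A)`, i.e. there is exactly one
incidence `(block, coordinate)` at `a`. -/
def Str.IsLeaf (A : Str σ ar) (a : A.V) : Prop :=
  Nat.card { e : Σ b : A.Block, Fin (ar b.1) // e.1.2.1 e.2 = a } = 1

/-- A block is pendant when it is incident to at most one non-leaf. -/
def Str.IsPendant (A : Str σ ar) (b : A.Block) : Prop :=
  Set.Subsingleton { a : A.V | ¬ A.IsLeaf a ∧ ∃ i, b.2.1 i = a }

/-- A `σ`-tree: the incidence multigraph is connected, has no cycles and no parallel edges. -/
def Str.IsTreeStr (A : Str σ ar) : Prop :=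
  (∀ b : A.Block, Function.Injective b.2.1) ∧ (IncGraph A).IsTree

/-- A `σ`-path: a `σ`-tree with at most two pendant blocks. -/
def Str.IsPathStr (A : Str σ ar) : Prop :=
  A.IsTreeStr ∧ Nat.card { b : A.Block // A.IsPendant b } ≤ 2

/-- The vertices removed when pruning: leaves attached to pendant blocks only. -/
def Str.Removed (A : Str σ ar) (a : A.V) : Prop :=
  A.IsLeaf a ∧ ∀ b : A.Block, (∃ i, b.2.1 i = a) → A.IsPendant b

/-- The structure obtained by removing all pendant blocks and the leaves attached to them. -/
def prune (A : Str σ ar) : Str σ ar where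
  V := { a : A.V // ¬ A.Removed a }
  finiteV := by have : Finite A.V := A.finiteV; exact inferInstance
  rel := fun R => { t | ∃ (t₀ : Fin (ar R) → A.V) (h₀ : t₀ ∈ A.rel R),
      ¬ A.IsPendant ⟨R, t₀, h₀⟩ ∧ ∀ i, (t i : A.V) = t₀ i }

/-- A `σ`-caterpillar: a `σ`-tree which is a path or becomes one after removing all
pendant blocks and the leaves attached to them. -/
def Str.IsCaterpillar (A : Str σ ar) : Prop :=
  A.IsTreeStr ∧ (A.IsPathStr ∨ (prune A).IsPathStr)

/-! Dualities. -/

/-- `(O, A)` is a homomorphism duality. -/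
def IsDuality (O : Set (Str σ ar)) (A : Str σ ar) : Prop :=
  ∀ B : Str σ ar, B.Hom A ↔ ∀ T ∈ O, ¬ T.Hom B

/-- `A` has caterpillar duality. -/
def HasCatDuality (A : Str σ ar) : Prop :=
  ∃ O : Set (Str σ ar), (∀ T ∈ O, T.IsCaterpillar) ∧ IsDuality O A

/-- `A` has path duality. -/
def HasPathDuality (A : Str σ ar) : Prop :=
  ∃ O : Set (Str σ ar), (∀ T ∈ O, T.IsPathStr) ∧ IsDuality O A

/-! The construction `Γ` on a deterministic automaton. -/

/-- The structure `Γ(D, {q₀}, T)`: universe is the set of subsets of `V(D)` containing `q₀`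
and disjoint from `T`; `(X_1,…,X_k) ∈ R(Γ D)` iff for all `(i,j)` and all `a ∈ X_i`,
every `b` with `(a,b) ∈ R^(i,j)(D)` lies in `X_j`. -/
def GammaStr (D : Str2 σ ar) (q0 : D.V) (T : Set D.V) : Str σ ar where
  V := { X : Set D.V // q0 ∈ X ∧ ∀ x ∈ X, x ∉ T }
  finiteV := by have : Finite D.V := D.finiteV; exact inferInstance
  rel := fun R => { t | ∀ (i j : Fin (ar R)) (a : D.V), a ∈ (t i).1 →
      ∀ b : D.V, (a, b) ∈ D.rel ⟨R, (i, j)⟩ → b ∈ (t j).1 }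

theorem test : True := trivial

/-! By the adjunction `β* ⊣ β`, the caterpillar `β*(P_w)` maps to `B` exactly when `w` labels a
walk in `β(B)`. Fix a DFA `M` for `L` and label each element `b` of `B` by the set of states that
`M` reaches on words labelling walks ending at `b`. These labels contain the initial state and are
closed under the transitions along the blocks of `B`, so they form a homomorphism to `Γ(M)` as soon
as they avoid the accepting states, i.e. as soon as no word of `L` labels a walk in `β(B)`.
Conversely, a homomorphism `B → Γ(M)` carries the run of `M` along every walk of `β(B)`, so the
run of an accepted word would end in an accepting state inside an element of `Γ(M)`. -/

section

variable {σ : Type} {ar : σ → ℕ}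

theorem strBetaStar_hom_iff [Finite σ] (X : Str2 σ ar) (B : Str σ ar) :
    (strBetaStar X).Hom B ↔ X.Hom (strBeta B) := by
  constructor
  · rintro ⟨F, hF⟩
    refine ⟨fun x => F (Quot.mk _ (Sum.inl x)), fun s p hp => ?_⟩
    have hblock : (fun m => Quot.mk (PreRel X) (Sum.inr ⟨s, ⟨p, hp⟩, m⟩)) ∈
        (strBetaStar X).rel s.1 := ⟨s.2.1, s.2.2, p, hp, rfl⟩
    exact ⟨_, hF s.1 _ hblock, congrArg F (Quot.sound (PreRel.left s ⟨p, hp⟩)),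
      congrArg F (Quot.sound (PreRel.right s ⟨p, hp⟩))⟩
  · rintro ⟨g, hg⟩
    choose u hu hu_left hu_right using
      fun (s : Sig2 σ ar) (p : { p : X.V × X.V // p ∈ X.rel s }) => hg s p.1 p.2
    refine ⟨Quot.lift (Sum.elim g fun e => u e.1 e.2.1 e.2.2) ?_, ?_⟩
    · rintro _ _ (⟨s, p⟩ | ⟨s, p⟩)
      · exact hu_left s p
      · exact hu_right s p
    · rintro R t ⟨i, j, p, hp, rfl⟩
      exact hu ⟨R, (i, j)⟩ ⟨p, hp⟩

/-- Indexing by `ℕ` rather than `Fin (w.length + 1)` lets walks be extended without casts;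
the values of `g` beyond `w.length` are irrelevant. -/
def Str2.IsWalk (Y : Str2 σ ar) (w : List (Sig2 σ ar)) (g : ℕ → Y.V) : Prop :=
  ∀ t (ht : t < w.length), (g t, g (t + 1)) ∈ Y.rel w[t]

theorem Str2.isWalk_nil (Y : Str2 σ ar) (g : ℕ → Y.V) : Y.IsWalk [] g :=
  fun _ ht => absurd ht (Nat.not_lt_zero _)

theorem Str2.isWalk_append_singleton_iff {Y : Str2 σ ar} {w : List (Sig2 σ ar)}
    {s : Sig2 σ ar} {g : ℕ → Y.V} :
    Y.IsWalk (w ++ [s]) g ↔ Y.IsWalk w g ∧ (g w.length, g (w.length + 1)) ∈ Y.rel s := by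
  constructor
  · intro h
    refine ⟨fun t ht => ?_, ?_⟩
    · have hedge := h t (by simp; omega)
      rwa [List.getElem_append_left ht] at hedge
    · simpa using h w.length (by simp)
  · rintro ⟨hw, hs⟩ t ht
    rcases Nat.lt_or_ge t w.length with ht' | ht'
    · rw [List.getElem_append_left ht']
      exact hw t ht'
    · obtain rfl : t = w.length := by simp at ht; omega
      simpa using hs

theorem Str2.IsWalk.congr {Y : Str2 σ ar} {w : List (Sig2 σ ar)} {g g' : ℕ → Y.V}
    (hg : Y.IsWalk w g) (heq : ∀ n ≤ w.length, g n = g' n) : Y.IsWalk w g' := by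
  intro t ht
  rw [← heq t ht.le, ← heq (t + 1) ht]
  exact hg t ht

theorem Str2.IsWalk.snoc {Y : Str2 σ ar} {w : List (Sig2 σ ar)} {g : ℕ → Y.V}
    (hg : Y.IsWalk w g) {s : Sig2 σ ar} {c : Y.V} (hc : (g w.length, c) ∈ Y.rel s) :
    Y.IsWalk (w ++ [s]) (Function.update g (w.length + 1) c) := by
  refine Str2.isWalk_append_singleton_iff.2 ⟨hg.congr fun n hn => ?_, ?_⟩
  · rw [Function.update_of_ne (by omega)]
  · simpa using hc

theorem pathStr_hom_iff [Finite σ] (Y : Str2 σ ar) (w : List (Sig2 σ ar)) :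
    (PathStr w).Hom Y ↔ ∃ g : ℕ → Y.V, Y.IsWalk w g := by
  constructor
  · rintro ⟨F, hF⟩
    refine ⟨fun n => F ⟨min n w.length, by omega⟩, fun t ht => ?_⟩
    have hedge :=
      hF w[t] (Fin.castSucc ⟨t, ht⟩, Fin.succ ⟨t, ht⟩) ⟨⟨t, ht⟩, rfl, rfl⟩
    convert hedge using 4 <;> exact congrArg F (Fin.ext (by simp; omega))
  · rintro ⟨g, hg⟩
    refine ⟨fun m => g m.1, ?_⟩
    rintro s p ⟨t, rfl, rfl⟩
    exact hg t t.2

theorem gammaStr_rel_step {D : Str2 σ ar} {q0 : D.V} {T : Set D.V}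
    {x y : (GammaStr D q0 T).V} {s : Sig2 σ ar}
    (hxy : (x, y) ∈ (strBeta (GammaStr D q0 T)).rel s) {a b : D.V} (ha : a ∈ x.1)
    (hab : (a, b) ∈ D.rel s) : b ∈ y.1 := by
  obtain ⟨u, hu, rfl, rfl⟩ := hxy
  exact hu s.2.1 s.2.2 a ha b hab

end

namespace DFA

variable {σ : Type} {ar : σ → ℕ} {Q : Type} (M : DFA (Sig2 σ ar) Q)

abbrev toStr2 [Finite Q] : Str2 σ ar where
  V := Q
  finiteV := inferInstance
  rel := fun s => { p | M.step p.1 s = p.2 }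

abbrev gammaStr [Finite Q] : Str σ ar := GammaStr M.toStr2 M.start M.accept

def reachedAt (B : Str σ ar) (b : B.V) : Set Q :=
  { q | ∃ w g, (strBeta B).IsWalk w g ∧ g w.length = b ∧ M.eval w = q }

variable [Finite Q] {M}

theorem mem_toStr2_rel {s : Sig2 σ ar} {a b : M.toStr2.V} :
    (a, b) ∈ M.toStr2.rel s ↔ M.step a s = b :=
  Iff.rfl

theorem eval_mem_of_isWalk [Finite σ] {B : Str σ ar} {f : B.V → M.gammaStr.V}
    (hf : ∀ R t, t ∈ B.rel R → (fun i => f (t i)) ∈ M.gammaStr.rel R)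
    (w : List (Sig2 σ ar)) {g : ℕ → B.V} (hg : (strBeta B).IsWalk w g) :
    M.eval w ∈ (f (g w.length)).1 := by
  induction w using List.reverseRecOn generalizing g with
  | nil => exact (f (g 0)).2.1
  | append_singleton w s ih =>
    obtain ⟨hw, u, hu, hu_left, hu_right⟩ := Str2.isWalk_append_singleton_iff.1 hg
    have hedge : (f (g w.length), f (g (w.length + 1))) ∈ (strBeta M.gammaStr).rel s :=
      ⟨_, hf s.1 u hu, by simp only [hu_left], by simp only [hu_right]⟩
    simpa using gammaStr_rel_step hedge (ih hw) (mem_toStr2_rel.2 rfl)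

theorem not_hom_of_hom_gammaStr [Finite σ] {B : Str σ ar} (hB : B.Hom M.gammaStr)
    {w : List (Sig2 σ ar)} (hw : w ∈ M.accepts) : ¬ (strBetaStar (PathStr w)).Hom B := by
  obtain ⟨f, hf⟩ := hB
  rw [strBetaStar_hom_iff, pathStr_hom_iff]
  rintro ⟨g, hg⟩
  exact (f (g w.length)).2.2 _ (eval_mem_of_isWalk hf w hg) hw

theorem hom_gammaStr_of_forall_not_hom [Finite σ] {B : Str σ ar}
    (hB : ∀ w ∈ M.accepts, ¬ (strBetaStar (PathStr w)).Hom B) : B.Hom M.gammaStr := by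
  have start_mem (b : B.V) : M.start ∈ M.reachedAt B b :=
    ⟨[], fun _ => b, Str2.isWalk_nil _ _, rfl, rfl⟩
  have not_accept (b : B.V) : ∀ q ∈ M.reachedAt B b, q ∉ M.accept := by
    rintro q ⟨w, g, hg, -, rfl⟩ hq
    exact hB w hq ((strBetaStar_hom_iff _ _).2 ((pathStr_hom_iff _ w).2 ⟨g, hg⟩))
  refine ⟨fun b => ⟨M.reachedAt B b, start_mem b, not_accept b⟩, ?_⟩
  rintro R t ht i j _ ⟨w, g, hg, hend, rfl⟩ _ hstep
  rw [mem_toStr2_rel] at hstep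
  subst hstep
  exact ⟨w ++ [⟨R, (i, j)⟩], _, hg.snoc ⟨t, ht, hend.symm, rfl⟩,
    by rw [List.length_append, List.length_singleton]; exact Function.update_self _ _ _, by simp⟩

theorem hom_gammaStr_iff [Finite σ] (B : Str σ ar) :
    B.Hom M.gammaStr ↔ ∀ w ∈ M.accepts, ¬ (strBetaStar (PathStr w)).Hom B :=
  ⟨fun hB _ => not_hom_of_hom_gammaStr hB, hom_gammaStr_of_forall_not_hom⟩

end DFA

/-- for every regular language `L` over `σ₂` there is a structure `A` such
that `(O, A)` is a homomorphism duality, where `O` is the family of caterpillars described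
by the words of `L`. -/
theorem stmt_5 (σ : Type) [Finite σ] (ar : σ → ℕ) (L : Language (Sig2 σ ar))
    (hL : L.IsRegular) :
    ∃ A : Str σ ar, ∀ B : Str σ ar,
      B.Hom A ↔ ∀ w ∈ L, ¬ (strBetaStar (PathStr w)).Hom B := by
  obtain ⟨Q, _, M, rfl⟩ := hL
  exact ⟨M.gammaStr, DFA.hom_gammaStr_iff⟩
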